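/- Let R = k[x,y,z]/(x²-y², y²-z²) with char k ≠ 2, and with (t₀,t₁) = (1,0) let Ψ₀⁺ = [[x+y, z],[0, x-y]] over R. Then there is a short exact sequence of graded R-modules 0 → D₀⁻ → coker(Ψ₀⁺ : R(-1)² → R²) → D₀⁺ → 0, where D₀⁺ = R/(x-y) and D₀⁻ = R/(x+y), and this sequence does not split. -/

import Mathlib

open MvPolynomial

noncomputable section

variable (k : Type) [Field k]

def fourPtsIdeal : Ideal (MvPolynomial (Fin 3) k) :=
  Ideal.span {(X 0 : MvPolynomial (Fin 3) k) ^ 2 - X 1 ^ 2,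
              (X 1 : MvPolynomial (Fin 3) k) ^ 2 - X 2 ^ 2}

/-- `R = k[x,y,z]/(x² - y², y² - z²)`. -/
def Rring := MvPolynomial (Fin 3) k ⧸ fourPtsIdeal k

instance : CommRing (Rring k) := Ideal.Quotient.commRing _

/-- `D₀⁺ = R/(x-y)`. -/
def D0plus := Rring k ⧸ Ideal.span {Ideal.Quotient.mk (fourPtsIdeal k) (X 0 - X 1)}

/-- `D₀⁻ = R/(x+y)`. -/
def D0minus := Rring k ⧸ Ideal.span {Ideal.Quotient.mk (fourPtsIdeal k) (X 0 + X 1)}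

instance : AddCommGroup (D0plus k) :=
  inferInstanceAs (AddCommGroup (Rring k ⧸ Ideal.span {Ideal.Quotient.mk (fourPtsIdeal k) (X 0 - X 1)}))
instance : Module (Rring k) (D0plus k) :=
  Submodule.Quotient.module (Ideal.span {Ideal.Quotient.mk (fourPtsIdeal k) (X 0 - X 1)})
instance : AddCommGroup (D0minus k) :=
  inferInstanceAs (AddCommGroup (Rring k ⧸ Ideal.span {Ideal.Quotient.mk (fourPtsIdeal k) (X 0 + X 1)}))
instance : Module (Rring k) (D0minus k) :=
  Submodule.Quotient.module (Ideal.span {Ideal.Quotient.mk (fourPtsIdeal k) (X 0 + X 1)})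

/-- The upper-triangular matrix factorization `Ψ₀⁺ = [[x+y, z], [0, x-y]]` of
`Q₀ = x² - y²`, as a matrix over `R`. -/
def Psi0plusR : Matrix (Fin 2) (Fin 2) (Rring k) :=
  (!![X 0 + X 1, X 2; 0, X 0 - X 1]).map (Ideal.Quotient.mk (fourPtsIdeal k))

/-- `N₀⁺ = coker(Ψ₀⁺ : R(-1)² → R²)`. -/
def N0plus := (Fin 2 → Rring k) ⧸ LinearMap.range (Psi0plusR k).mulVecLin

instance : AddCommGroup (N0plus k) :=
  inferInstanceAs (AddCommGroup ((Fin 2 → Rring k) ⧸ LinearMap.range (Psi0plusR k).mulVecLin))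
instance : Module (Rring k) (N0plus k) :=
  inferInstanceAs (Module (Rring k) ((Fin 2 → Rring k) ⧸ LinearMap.range (Psi0plusR k).mulVecLin))

/-! ### Auxiliary material -/

namespace Stmt14Aux

/-- Helper instance: `Rring k` is definitionally the quotient ring, so it is a module
over the quotient ring (by definitional unfolding). -/
instance : Module (MvPolynomial (Fin 3) k ⧸ fourPtsIdeal k) (Rring k) :=
  inferInstanceAs (Module (Rring k) (Rring k))

instance : @Module (Rring k) (Rring k) Ring.toSemiring AddCommGroup.toAddCommMonoid :=
  Semiring.toModule

/-- substitution `x ↦ y`. -/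
def sg : MvPolynomial (Fin 3) k →ₐ[k] MvPolynomial (Fin 3) k :=
  aeval (fun i => if i = 0 then X 1 else X i)

lemma sg_X0 : sg k (X 0) = X 1 := by simp [sg]
lemma sg_X1 : sg k (X 1) = X 1 := by simp [sg]
lemma sg_X2 : sg k (X 2) = X 2 := by simp [sg]

lemma key0 (p : MvPolynomial (Fin 3) k) : ∃ r, p = sg k p + (X 0 - X 1) * r := by
  induction p using MvPolynomial.induction_on with
  | C a => exact ⟨0, by simp [sg]⟩
  | add p q hp hq =>
    obtain ⟨r, hr⟩ := hp; obtain ⟨s, hs⟩ := hq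
    exact ⟨r + s, by rw [map_add]; linear_combination hr + hs⟩
  | mul_X p i hp =>
    obtain ⟨r, hr⟩ := hp
    by_cases h : i = 0
    · subst h
      refine ⟨sg k p + r * X 0, ?_⟩
      rw [map_mul, sg_X0]
      linear_combination (X 0 : MvPolynomial (Fin 3) k) * hr
    · refine ⟨r * X i, ?_⟩
      have : sg k (X i) = X i := by simp [sg, h]
      rw [map_mul, this]
      linear_combination (X i : MvPolynomial (Fin 3) k) * hr

lemma Bne : (X 0 - X 1 : MvPolynomial (Fin 3) k) ≠ 0 := by
  intro h
  have := congrArg (eval (![1,0,0] : Fin 3 → k)) h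
  simp at this

lemma f2ne : (X 1 ^ 2 - X 2 ^ 2 : MvPolynomial (Fin 3) k) ≠ 0 := by
  intro h
  have := congrArg (eval (![0,1,0] : Fin 3 → k)) h
  simp at this

lemma key1 (v : MvPolynomial (Fin 3) k) (h : (X 0 - X 1) * v ∈ fourPtsIdeal k) :
    ∃ p r, v = (X 0 + X 1) * p + (X 1 ^ 2 - X 2 ^ 2) * r := by
  rw [fourPtsIdeal, Ideal.mem_span_pair] at h
  obtain ⟨s, t, h⟩ := h
  have hσ := congrArg (sg k) h
  simp only [map_add, map_mul, map_sub, map_pow, sg_X0, sg_X1, sg_X2, sub_self, mul_zero,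
    zero_mul, zero_add, add_zero] at hσ
  have hst : sg k t = 0 := by
    rcases mul_eq_zero.mp hσ with h' | h'
    · exact h'
    · exact absurd h' (f2ne k)
  obtain ⟨r, hr⟩ := key0 k t
  rw [hst, zero_add] at hr
  refine ⟨s, r, mul_left_cancel₀ (Bne k) ?_⟩
  rw [hr] at h
  linear_combination -h

lemma key2 (h : (X 2 : MvPolynomial (Fin 3) k) ∈
    Ideal.span {X 0 + X 1, X 0 - X 1, X 1 ^ 2 - X 2 ^ 2}) : False := by
  rw [Ideal.mem_span_insert] at h
  obtain ⟨a, w, hw, h⟩ := h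
  rw [Ideal.mem_span_insert] at hw
  obtain ⟨b, u, hu, hw⟩ := hw
  rw [Ideal.mem_span_singleton'] at hu
  obtain ⟨c, hu⟩ := hu
  subst hu hw
  set ψ : MvPolynomial (Fin 3) k →ₐ[k] Polynomial k :=
    aeval (![0, 0, Polynomial.X] : Fin 3 → Polynomial k) with hψ
  have h2 := congrArg ψ h
  have e0 : ψ (X 0) = 0 := by simp [hψ]
  have e1 : ψ (X 1) = 0 := by simp [hψ]
  have e2 : ψ (X 2) = Polynomial.X := by simp [hψ]
  simp only [map_add, map_mul, map_sub, map_pow, e0, e1, e2] at h2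
  have h3 : (Polynomial.X : Polynomial k) * 1 = Polynomial.X * (Polynomial.X * (- ψ c)) := by
    linear_combination h2
  have h4 := mul_left_cancel₀ (Polynomial.X_ne_zero) h3
  have h5 := congrArg (Polynomial.eval 0) h4
  simp at h5

/-- The class of `x + y` in `R`. -/
def Ae : Rring k := Ideal.Quotient.mk (fourPtsIdeal k) (X 0 + X 1)
/-- The class of `x - y` in `R`. -/
def Be : Rring k := Ideal.Quotient.mk (fourPtsIdeal k) (X 0 - X 1)
/-- The class of `z` in `R`. -/
def Ze : Rring k := Ideal.Quotient.mk (fourPtsIdeal k) (X 2)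

lemma Rmk_surj : ∀ v : Rring k, ∃ p, Ideal.Quotient.mk (fourPtsIdeal k) p = v := fun v =>
  Ideal.Quotient.mk_surjective v

lemma keyR1 (v : Rring k) (h : Be k * v = 0) : v ∈ Ideal.span {Ae k} := by
  obtain ⟨p, rfl⟩ := Rmk_surj k v
  have hm : (X 0 - X 1) * p ∈ fourPtsIdeal k := by
    rw [← Ideal.Quotient.eq_zero_iff_mem, map_mul]
    exact h
  obtain ⟨q, r, hqr⟩ := key1 k p hm
  have hf2 : (Ideal.Quotient.mk (fourPtsIdeal k)) (X 1 ^ 2 - X 2 ^ 2) = 0 := by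
    rw [Ideal.Quotient.eq_zero_iff_mem]
    exact Ideal.subset_span (Set.mem_insert_of_mem _ rfl)
  refine Ideal.mem_span_singleton'.mpr ?_
  refine ⟨Ideal.Quotient.mk (fourPtsIdeal k) q, ?_⟩
  rw [hqr, map_add, map_mul, map_mul, hf2, zero_mul, add_zero, Ae, mul_comm]
  rfl

lemma keyR2 (h : Ze k ∈ Ideal.span {Ae k, Be k}) : False := by
  rw [Ideal.mem_span_pair] at h
  obtain ⟨a, b, hab⟩ := h
  obtain ⟨a', rfl⟩ := Rmk_surj k a
  obtain ⟨b', rfl⟩ := Rmk_surj k b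
  have : X 2 - (a' * (X 0 + X 1) + b' * (X 0 - X 1)) ∈ fourPtsIdeal k := by
    rw [← Ideal.Quotient.eq_zero_iff_mem, map_sub, map_add, map_mul, map_mul, map_add, map_sub]
    rw [sub_eq_zero]
    exact hab.symm
  apply key2 k
  have hsub : fourPtsIdeal k ≤
      Ideal.span {X 0 + X 1, X 0 - X 1, (X 1 : MvPolynomial (Fin 3) k) ^ 2 - X 2 ^ 2} := by
    rw [fourPtsIdeal, Ideal.span_le]
    rintro f (rfl | rfl)
    · rw [SetLike.mem_coe]
      have hA : (X 0 + X 1 : MvPolynomial (Fin 3) k) ∈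
          Ideal.span {X 0 + X 1, X 0 - X 1, (X 1 : MvPolynomial (Fin 3) k) ^ 2 - X 2 ^ 2} :=
        Ideal.subset_span (Set.mem_insert _ _)
      have := Ideal.mul_mem_right (X 0 - X 1) _ hA
      convert this using 1
      ring
    · exact Ideal.subset_span (Set.mem_insert_of_mem _ (Set.mem_insert_of_mem _ rfl))
  have hz : (X 2 : MvPolynomial (Fin 3) k) =
      a' * (X 0 + X 1) + b' * (X 0 - X 1) +
        (X 2 - (a' * (X 0 + X 1) + b' * (X 0 - X 1))) := by ring
  have hmem := Ideal.add_mem _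
    (Ideal.add_mem _
      (Ideal.mul_mem_left _ a' (Ideal.subset_span (Set.mem_insert _ _)))
      (Ideal.mul_mem_left _ b'
        (Ideal.subset_span (Set.mem_insert_of_mem _ (Set.mem_insert _ _)))))
    (hsub this)
  rwa [← hz] at hmem

lemma mulVecLin_eq (w : Fin 2 → Rring k) :
    (Psi0plusR k).mulVecLin w = ![Ae k * w 0 + Ze k * w 1, Be k * w 1] := by
  funext i
  fin_cases i
  · show ((Psi0plusR k).mulVec w) 0 = _
    simp only [Psi0plusR, Matrix.mulVec, dotProduct, Fin.sum_univ_two,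
      Matrix.map_apply, Matrix.of_apply, Matrix.cons_val_zero, Matrix.cons_val_one,
      Matrix.head_cons, Matrix.cons_val']
    rfl
  · show ((Psi0plusR k).mulVec w) 1 = _
    simp only [Psi0plusR, Matrix.mulVec, dotProduct, Fin.sum_univ_two,
      Matrix.map_apply, Matrix.of_apply, Matrix.cons_val_zero, Matrix.cons_val_one,
      Matrix.head_cons, Matrix.cons_val']
    change (0 : Rring k) * w 0 + Be k * w 1 = _
    simp only [zero_mul, zero_add]
    rfl

lemma mem_range_iff (r : Fin 2 → Rring k) :
    r ∈ LinearMap.range (Psi0plusR k).mulVecLin ↔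
      ∃ u v, ![Ae k * u + Ze k * v, Be k * v] = r := by
  constructor
  · rintro ⟨w, rfl⟩
    exact ⟨w 0, w 1, (mulVecLin_eq k w).symm⟩
  · rintro ⟨u, v, rfl⟩
    refine ⟨![u, v], ?_⟩
    rw [mulVecLin_eq]
    simp

/-- the map `R → N₀⁺`, `r ↦ (r, 0)`. -/
def ff0 : Rring k →ₗ[Rring k] N0plus k :=
  (LinearMap.range (Psi0plusR k).mulVecLin).mkQ ∘ₗ
    LinearMap.single (Rring k) (fun _ : Fin 2 => Rring k) 0

lemma ff0_apply (r : Rring k) :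
    ff0 k r = (Submodule.Quotient.mk (Pi.single 0 r : Fin 2 → Rring k) : N0plus k) := rfl

lemma hff : Ideal.span {Ae k} ≤ LinearMap.ker (ff0 k) := by
  rw [Ideal.span_le, Set.singleton_subset_iff]
  show ff0 k (Ae k) = 0
  erw [ff0_apply, Submodule.Quotient.mk_eq_zero, mem_range_iff]
  refine ⟨1, 0, funext fun i => ?_⟩
  fin_cases i <;> simp

/-- the map `D₀⁻ → N₀⁺`. -/
def ff : D0minus k →ₗ[Rring k] N0plus k :=
  (Submodule.liftQ _ (ff0 k) (hff k) :
    (Rring k ⧸ Ideal.span {Ae k}) →ₗ[Rring k] N0plus k)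

lemma ff_apply (r : Rring k) :
    ff k (Submodule.Quotient.mk r : Rring k ⧸ Ideal.span {Ae k}) =
      (Submodule.Quotient.mk (Pi.single 0 r : Fin 2 → Rring k) : N0plus k) := rfl

/-- the map `R² → D₀⁺`, `(a,b) ↦ b`. -/
def gg0 : (Fin 2 → Rring k) →ₗ[Rring k] (Rring k ⧸ Ideal.span {Be k}) :=
  (Ideal.span {Be k}).mkQ ∘ₗ LinearMap.proj 1

lemma gg0_apply (w : Fin 2 → Rring k) : gg0 k w = Submodule.Quotient.mk (w 1) := rfl

lemma hgg : LinearMap.range (Psi0plusR k).mulVecLin ≤ LinearMap.ker (gg0 k) := by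
  rintro r hr
  obtain ⟨u, v, rfl⟩ := (mem_range_iff k r).mp hr
  show gg0 k _ = 0
  erw [gg0_apply, Submodule.Quotient.mk_eq_zero]
  simp only [Matrix.cons_val_one, Matrix.head_cons]
  exact Ideal.mem_span_singleton'.mpr ⟨v, mul_comm _ _⟩

/-- the map `N₀⁺ → D₀⁺`. -/
def gg : N0plus k →ₗ[Rring k] D0plus k :=
  (Submodule.liftQ _ (gg0 k) (hgg k) :
    N0plus k →ₗ[Rring k] (Rring k ⧸ Ideal.span {Be k}))

lemma gg_apply (w : Fin 2 → Rring k) :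
    gg k (Submodule.Quotient.mk w) = (Submodule.Quotient.mk (w 1) : Rring k ⧸ Ideal.span {Be k}) := rfl

lemma D0minus_surj (x : D0minus k) :
    ∃ r : Rring k, (Submodule.Quotient.mk r : Rring k ⧸ Ideal.span {Ae k}) = x :=
  Submodule.Quotient.mk_surjective (Ideal.span {Ae k}) x

lemma D0plus_surj (x : D0plus k) :
    ∃ r : Rring k, (Submodule.Quotient.mk r : Rring k ⧸ Ideal.span {Be k}) = x :=
  Submodule.Quotient.mk_surjective (Ideal.span {Be k}) x

lemma N0plus_surj (x : N0plus k) :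
    ∃ w : Fin 2 → Rring k, (Submodule.Quotient.mk w : N0plus k) = x :=
  Submodule.Quotient.mk_surjective _ x

end Stmt14Aux

/-- for `char k ≠ 2` there is a short exact sequence of graded `R`-modules
`0 → D₀⁻ → coker(Ψ₀⁺) → D₀⁺ → 0`, and this sequence does not split. -/
theorem stmt_14 (hchar : (2 : k) ≠ 0) :
    ∃ (f : D0minus k →ₗ[Rring k] N0plus k) (g : N0plus k →ₗ[Rring k] D0plus k),
      Function.Injective f ∧ Function.Surjective g ∧
      LinearMap.range f = LinearMap.ker g ∧
      ¬ ∃ s : D0plus k →ₗ[Rring k] N0plus k, g.comp s = LinearMap.id := by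
  classical
  open Stmt14Aux in
  refine ⟨ff k, gg k, ?_, ?_, ?_, ?_⟩
  · -- injectivity of f
    rw [← LinearMap.ker_eq_bot, Submodule.eq_bot_iff]
    intro x hx
    obtain ⟨r, rfl⟩ := D0minus_surj k x
    erw [LinearMap.mem_ker, ff_apply, Submodule.Quotient.mk_eq_zero,
      mem_range_iff] at hx
    obtain ⟨u, v, huv⟩ := hx
    have h0 := congrFun huv 0
    have h1 := congrFun huv 1
    simp only [Matrix.cons_val_one, Matrix.head_cons, Matrix.cons_val_zero] at h0 h1
    rw [Pi.single_eq_of_ne (by decide : (1 : Fin 2) ≠ 0)] at h1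
    rw [Pi.single_eq_same] at h0
    obtain ⟨c, hc⟩ := Ideal.mem_span_singleton'.mp (keyR1 k v h1)
    erw [Submodule.Quotient.mk_eq_zero]
    exact Ideal.mem_span_singleton'.mpr ⟨u + Ze k * c,
      by linear_combination h0 + Ze k * hc⟩
  · -- surjectivity of g
    intro d
    obtain ⟨r, rfl⟩ := D0plus_surj k d
    refine ⟨(Submodule.Quotient.mk ![0, r] : N0plus k), ?_⟩
    rw [gg_apply]
    simp
    rfl
  · -- exactness
    apply le_antisymm
    · rintro _ ⟨x, rfl⟩
      obtain ⟨r, rfl⟩ := D0minus_surj k x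
      erw [LinearMap.mem_ker, ff_apply, gg_apply, Submodule.Quotient.mk_eq_zero,
        Pi.single_eq_of_ne (by decide : (1 : Fin 2) ≠ 0)]
      exact Submodule.zero_mem _
    · intro n hn
      obtain ⟨w, rfl⟩ := N0plus_surj k n
      erw [LinearMap.mem_ker, gg_apply, Submodule.Quotient.mk_eq_zero] at hn
      obtain ⟨c, hc⟩ := Ideal.mem_span_singleton'.mp hn
      refine ⟨(Submodule.Quotient.mk (w 0 - Ze k * c) : Rring k ⧸ Ideal.span {Ae k}), ?_⟩
      erw [ff_apply, Submodule.Quotient.eq, mem_range_iff]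
      refine ⟨0, -c, funext fun i => ?_⟩
      fin_cases i
      · simp only [Fin.zero_eta, Fin.isValue, Matrix.cons_val_zero, Pi.sub_apply,
          Pi.single_eq_same]
        ring
      · simp only [Fin.mk_one, Fin.isValue, Matrix.cons_val_one, Matrix.head_cons, Pi.sub_apply,
          Pi.single_eq_of_ne (by decide : (1 : Fin 2) ≠ 0)]
        simp only [Matrix.cons_val_zero]
        linear_combination -hc
  · -- non-splitting
    rintro ⟨s, hs⟩
    have hs1 := LinearMap.ext_iff.mp hs
      ((Submodule.Quotient.mk 1 : Rring k ⧸ Ideal.span {Be k}))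
    change gg k (s (Submodule.Quotient.mk 1 : Rring k ⧸ Ideal.span {Be k})) =
      (Submodule.Quotient.mk 1 : Rring k ⧸ Ideal.span {Be k}) at hs1
    obtain ⟨w, hw⟩ := N0plus_surj k (s (Submodule.Quotient.mk 1 : Rring k ⧸ Ideal.span {Be k}))
    have hBs : Be k • s ((Submodule.Quotient.mk 1 : Rring k ⧸ Ideal.span {Be k})) = 0 := by
      erw [← map_smul]
      have hz : Be k • (Submodule.Quotient.mk (1 : Rring k) :
          Rring k ⧸ Ideal.span {Be k}) = 0 := by
        erw [← Submodule.Quotient.mk_smul, Submodule.Quotient.mk_eq_zero]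
        exact Ideal.mem_span_singleton'.mpr ⟨1, by simp⟩
      erw [hz, map_zero]
    erw [← hw, ← Submodule.Quotient.mk_smul, Submodule.Quotient.mk_eq_zero,
      mem_range_iff] at hBs
    obtain ⟨u, v, huv⟩ := hBs
    have h0 := congrFun huv 0
    have h1 := congrFun huv 1
    simp only [Matrix.cons_val_zero, Matrix.cons_val_one, Matrix.head_cons, Pi.smul_apply,
      smul_eq_mul] at h0 h1
    have hBv : Be k * (v - w 1) = 0 := by linear_combination h1
    obtain ⟨c, hc⟩ := Ideal.mem_span_singleton'.mp (keyR1 k _ hBv)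
    erw [← hw, gg_apply, Submodule.Quotient.eq] at hs1
    obtain ⟨d, hd⟩ := Ideal.mem_span_singleton'.mp hs1
    exact keyR2 k (Ideal.mem_span_pair.mpr
      ⟨-u - Ze k * c, w 0 - Ze k * d,
        by linear_combination (-1 : Rring k) * h0 - Ze k * hc - Ze k * hd⟩)


end
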